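/- arXiv:2107.07660 — 2 statements merged into one kernel-verified Lean document; each statement's English description precedes it below -/
import Mathlib

section
/- Let U ⊆ ℂ be open with 0 ∈ U, and let φ : U \ {0} → ℂ be holomorphic. If the complex derivative φ′ is integrable with respect to two-dimensional Lebesgue measure on some punctured neighborhood of 0 (i.e., there is ρ > 0 with B(0,ρ) ⊆ U and ∫_{B(0,ρ)} |φ′| dA < ∞), then φ extends to a holomorphic function on all of U. -/
open MeasureTheory Metric Real Set Filter intervalIntegral
open scoped Topology

/-- Circle sub-mean-value inequality. -/
lemma circ_mean {h : ℂ → ℂ} {z : ℂ} {s : ℝ} (hs : 0 < s)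
    (hc : ContinuousOn h (closedBall z s))
    (hd : ∀ w ∈ ball z s, DifferentiableAt ℂ h w) :
    2 * π * ‖h z‖ ≤ ∫ θ in (0 : ℝ)..2 * π, ‖h (circleMap z s θ)‖ := by
  have hcauchy := Complex.circleIntegral_sub_center_inv_smul_of_differentiable_on_off_countable
    hs (Set.countable_empty) hc (fun w hw => hd w hw.1)
  rw [circleIntegral] at hcauchy
  have heq : ∀ θ : ℝ, deriv (circleMap z s) θ • (circleMap z s θ - z)⁻¹ • h (circleMap z s θ)
      = Complex.I * h (circleMap z s θ) := by
    intro θ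
    have hne : circleMap 0 s θ ≠ 0 := circleMap_ne_center hs.ne'
    rw [deriv_circleMap, circleMap_sub_center, smul_eq_mul, smul_eq_mul]
    field_simp
  simp only [heq] at hcauchy
  have h1 : ‖∫ θ in (0:ℝ)..2 * π, Complex.I * h (circleMap z s θ)‖ = 2 * π * ‖h z‖ := by
    rw [hcauchy]
    simp [norm_smul, Complex.norm_I, abs_of_pos Real.pi_pos]
  calc 2 * π * ‖h z‖ = ‖∫ θ in (0:ℝ)..2 * π, Complex.I * h (circleMap z s θ)‖ := h1.symm
    _ ≤ ∫ θ in (0:ℝ)..2 * π, ‖Complex.I * h (circleMap z s θ)‖ :=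
        intervalIntegral.norm_integral_le_integral_norm (by positivity)
    _ = ∫ θ in (0:ℝ)..2 * π, ‖h (circleMap z s θ)‖ := by
        simp [norm_mul, Complex.norm_I]

/-- Area sub-mean-value inequality for holomorphic functions. -/
lemma area_mean {h : ℂ → ℂ} (hmeas : Measurable h) {z : ℂ} {r : ℝ} (hr : 0 < r)
    (hc : ContinuousOn h (closedBall z r))
    (hd : ∀ w ∈ ball z r, DifferentiableAt ℂ h w) :
    π * r ^ 2 * ‖h z‖ ≤ ∫ w in ball z r, ‖h w‖ := by
  obtain ⟨M, hM⟩ : ∃ M, ∀ w ∈ closedBall z r, ‖h w‖ ≤ M :=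
    (isCompact_closedBall z r).exists_bound_of_continuousOn hc
  have hM0 : 0 ≤ M := le_trans (norm_nonneg _) (hM z (mem_closedBall_self hr.le))
  set g : ℂ → ℝ := (ball (0:ℂ) r).indicator (fun w => ‖h (z + w)‖) with hg
  -- step 1 : translation
  have step1 : ∫ w in ball z r, ‖h w‖ = ∫ w, g w := by
    rw [← MeasureTheory.integral_indicator measurableSet_ball,
      ← MeasureTheory.integral_add_left_eq_self ((ball z r).indicator fun w => ‖h w‖) z]
    congr 1
    ext w
    rw [hg]
    by_cases hw : w ∈ ball (0:ℂ) r
    · have hzw : z + w ∈ ball z r := by simpa [mem_ball, dist_eq_norm] using hw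
      simp [Set.indicator_of_mem hw, Set.indicator_of_mem hzw]
    · have hzw : z + w ∉ ball z r := by simpa [mem_ball, dist_eq_norm] using hw
      simp [Set.indicator_of_notMem hw, Set.indicator_of_notMem hzw]
  -- step 2 : polar coordinates
  have step2 : ∫ w, g w = ∫ p in polarCoord.target, p.1 • g (Complex.polarCoord.symm p) :=
    (Complex.integral_comp_polarCoord_symm g).symm
  set F : ℝ × ℝ → ℝ := fun p => p.1 • g (Complex.polarCoord.symm p) with hF
  have hsymm_cont : Continuous fun p : ℝ × ℝ => Complex.polarCoord.symm p := by
    simp only [Complex.polarCoord_symm_apply]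
    fun_prop
  have hg_meas : Measurable g :=
    ((hmeas.comp (measurable_const.add measurable_id)).norm).indicator measurableSet_ball
  have hF_meas : Measurable F :=
    measurable_fst.smul (hg_meas.comp hsymm_cont.measurable)
  have hg_nonneg : ∀ w, 0 ≤ g w := fun w =>
    Set.indicator_nonneg (fun _ _ => norm_nonneg _) w
  have hg_bound : ∀ w, g w ≤ M := by
    intro w
    rw [hg]
    by_cases hw : w ∈ ball (0:ℂ) r
    · rw [Set.indicator_of_mem hw]
      exact hM _ (ball_subset_closedBall (by simpa [mem_ball, dist_eq_norm] using hw))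
    · rw [Set.indicator_of_notMem hw]; exact hM0
  have hg_zero : ∀ w : ℂ, r ≤ ‖w‖ → g w = 0 := by
    intro w hw
    rw [hg, Set.indicator_of_notMem]
    simp only [mem_ball, dist_eq_norm, sub_zero, not_lt]
    exact hw
  have htarget : polarCoord.target = Ioi (0:ℝ) ×ˢ Ioo (-π) π := rfl
  -- integrability of F on target
  have hF_int : IntegrableOn F polarCoord.target := by
    have hbd : Integrable ((Ioo (0:ℝ) r ×ˢ Ioo (-π) π).indicator fun _ => r * M)
        (volume.restrict polarCoord.target) := by
      apply Integrable.restrict (s := polarCoord.target)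
      rw [MeasureTheory.integrable_indicator_iff (measurableSet_Ioo.prod measurableSet_Ioo)]
      refine integrableOn_const ?_ ?_
      · rw [Measure.volume_eq_prod, Measure.prod_prod]
        exact (ENNReal.mul_lt_top (by simp) (by simp)).ne
      · exact enorm_ne_top
    apply Integrable.mono' hbd hF_meas.aestronglyMeasurable
    rw [htarget, ae_restrict_iff' (measurableSet_Ioi.prod measurableSet_Ioo)]
    apply ae_of_all
    rintro ⟨s, θ⟩ ⟨hs, hθ⟩
    simp only [mem_Ioi] at hs
    by_cases hsr : s < r
    · have hmem : (s, θ) ∈ Ioo (0:ℝ) r ×ˢ Ioo (-π) π := ⟨⟨hs, hsr⟩, hθ⟩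
      rw [Set.indicator_of_mem hmem, Real.norm_eq_abs, hF]
      simp only [smul_eq_mul]
      rw [abs_of_nonneg (mul_nonneg hs.le (hg_nonneg _))]
      calc s * g (Complex.polarCoord.symm (s, θ)) ≤ s * M :=
            mul_le_mul_of_nonneg_left (hg_bound _) hs.le
        _ ≤ r * M := by nlinarith
    · have hz0 : g (Complex.polarCoord.symm (s, θ)) = 0 := by
        apply hg_zero
        rw [Complex.norm_polarCoord_symm, abs_of_pos hs]
        linarith
      rw [hF]
      simp only [hz0, smul_zero, norm_zero]
      exact Set.indicator_nonneg (fun _ _ => by positivity) _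
  have hF_int' : IntegrableOn F (Ioi (0:ℝ) ×ˢ Ioo (-π) π)
      ((volume : Measure ℝ).prod volume) := by
    rw [← Measure.volume_eq_prod, ← htarget]; exact hF_int
  -- Fubini
  have fub : ∫ p in polarCoord.target, F p
      = ∫ s in Ioi (0:ℝ), ∫ θ in Ioo (-π) π, F (s, θ) := by
    rw [htarget, Measure.volume_eq_prod]
    exact setIntegral_prod F hF_int'
  have hmarg : IntegrableOn (fun s => ∫ θ in Ioo (-π) π, F (s, θ)) (Ioi (0:ℝ)) := by
    have h2 := hF_int'
    rw [IntegrableOn, ← Measure.prod_restrict] at h2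
    exact h2.integral_prod_left
  -- lower bound function
  set L : ℝ → ℝ := (Ioo (0:ℝ) r).indicator (fun s => 2 * π * ‖h z‖ * s) with hL
  have hL_int : IntegrableOn L (Ioi (0:ℝ)) := by
    have h1 : IntegrableOn (fun s : ℝ => 2 * π * ‖h z‖ * s) (Icc (0:ℝ) r) :=
      (continuous_const.mul continuous_id).continuousOn.integrableOn_compact isCompact_Icc
    exact ((integrable_indicator_iff measurableSet_Ioo).2
      (h1.mono_set Ioo_subset_Icc_self)).integrableOn
  have key : ∀ s ∈ Ioi (0:ℝ), L s ≤ ∫ θ in Ioo (-π) π, F (s, θ) := by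
    intro s hs
    simp only [mem_Ioi] at hs
    by_cases hsr : s < r
    · rw [hL, Set.indicator_of_mem (Set.mem_Ioo.2 ⟨hs, hsr⟩)]
      have hcm : ∀ θ : ℝ, F (s, θ) = s * ‖h (circleMap z s θ)‖ := by
        intro θ
        have habs : Complex.polarCoord.symm (s, θ) ∈ ball (0:ℂ) r := by
          rw [mem_ball, dist_eq_norm, sub_zero,
            Complex.norm_polarCoord_symm, abs_of_pos hs]
          exact hsr
        have hcirc : z + Complex.polarCoord.symm (s, θ) = circleMap z s θ := by
          rw [Complex.polarCoord_symm_apply, circleMap, Complex.exp_mul_I]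
          push_cast
          ring
        rw [hF]
        simp only [hg, Set.indicator_of_mem habs, hcirc, smul_eq_mul]
      have hcirc_mean := circ_mean hs (hc.mono (closedBall_subset_closedBall hsr.le))
        (fun w hw => hd w (ball_subset_ball hsr.le hw))
      have hper : Function.Periodic (fun θ : ℝ => ‖h (circleMap z s θ)‖) (2 * π) :=
        fun θ => congrArg (fun w => ‖h w‖) (periodic_circleMap z s θ)
      have hshift := hper.intervalIntegral_add_eq (-π) 0
      rw [show -π + 2 * π = π by ring, zero_add] at hshift
      calc 2 * π * ‖h z‖ * s ≤ (∫ θ in (0:ℝ)..2 * π, ‖h (circleMap z s θ)‖) * s :=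
            mul_le_mul_of_nonneg_right hcirc_mean hs.le
        _ = ∫ θ in Ioo (-π) π, F (s, θ) := by
            simp only [hcm]
            rw [MeasureTheory.integral_Ioc_eq_integral_Ioo.symm,
              ← intervalIntegral.integral_of_le (by linarith [Real.pi_pos]),
              hshift.symm, intervalIntegral.integral_const_mul]
            ring
    · rw [hL, Set.indicator_of_notMem (fun hmem => hsr hmem.2)]
      exact setIntegral_nonneg measurableSet_Ioo
        (fun θ _ => smul_nonneg hs.le (hg_nonneg _))
  have hmono := setIntegral_mono_on hL_int hmarg measurableSet_Ioi key
  have hLval : ∫ s in Ioi (0:ℝ), L s = π * r ^ 2 * ‖h z‖ := by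
    rw [hL, setIntegral_indicator measurableSet_Ioo,
      Set.inter_eq_self_of_subset_right Ioo_subset_Ioi_self,
      ← MeasureTheory.integral_Ioc_eq_integral_Ioo,
      ← intervalIntegral.integral_of_le hr.le, intervalIntegral.integral_const_mul,
      integral_id]
    ring
  calc π * r ^ 2 * ‖h z‖ = ∫ s in Ioi (0:ℝ), L s := hLval.symm
    _ ≤ ∫ s in Ioi (0:ℝ), ∫ θ in Ioo (-π) π, F (s, θ) := hmono
    _ = ∫ p in polarCoord.target, F p := fub.symm
    _ = ∫ w, g w := step2.symm
    _ = ∫ w in ball z r, ‖h w‖ := step1.symm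

lemma small_integral {φ : ℂ → ℂ} {ρ : ℝ} (hρ : 0 < ρ)
    (hnorm_int : IntegrableOn (fun w => ‖deriv φ w‖) (ball (0:ℂ) ρ)) :
    ∀ ε > (0:ℝ), ∃ δ, 0 < δ ∧ δ < ρ ∧ (∫ w in ball (0:ℂ) δ, ‖deriv φ w‖) < ε := by
  intro ε hε
  have hmeas : Measurable (deriv φ) := measurable_deriv φ
  set δn : ℕ → ℝ := fun n => min ((n+1:ℝ)⁻¹) (ρ/2) with hδn
  have hδnpos : ∀ n, 0 < δn n := fun n => lt_min (by positivity) (by positivity)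
  have hδnρ : ∀ n, δn n < ρ := fun n => (min_le_right _ _).trans_lt (by linarith)
  have htend : Tendsto (fun n : ℕ => ∫ w in ball (0:ℂ) (δn n), ‖deriv φ w‖) atTop (𝓝 0) := by
    have heq : ∀ n : ℕ, ∫ w in ball (0:ℂ) (δn n), ‖deriv φ w‖
        = ∫ w, (ball (0:ℂ) (δn n)).indicator (fun w => ‖deriv φ w‖) w := fun n =>
      (MeasureTheory.integral_indicator measurableSet_ball).symm
    simp only [heq]
    have h00 : (0:ℝ) = ∫ _ : ℂ, (0:ℝ) := by simp
    rw [h00]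
    apply MeasureTheory.tendsto_integral_of_dominated_convergence
      ((ball (0:ℂ) ρ).indicator fun w => ‖deriv φ w‖)
    · exact fun n => (hmeas.norm.indicator measurableSet_ball).aestronglyMeasurable
    · exact (integrable_indicator_iff measurableSet_ball).2 hnorm_int
    · intro n
      apply ae_of_all
      intro w
      rw [Real.norm_eq_abs, abs_of_nonneg (Set.indicator_nonneg (fun _ _ => norm_nonneg _) _)]
      exact Set.indicator_le_indicator_of_subset
        (ball_subset_ball (hδnρ n).le) (fun _ => norm_nonneg _) w
    · have hne : ∀ᵐ w : ℂ, w ≠ 0 := by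
        rw [ae_iff]
        simpa using measure_singleton (0:ℂ)
      filter_upwards [hne] with w hw
      have hev : ∀ᶠ n : ℕ in atTop, (ball (0:ℂ) (δn n)).indicator
          (fun w => ‖deriv φ w‖) w = 0 := by
        have hw0 : 0 < ‖w‖ := norm_pos_iff.2 hw
        obtain ⟨N, hN⟩ := exists_nat_gt ‖w‖⁻¹
        filter_upwards [eventually_ge_atTop N] with n hn
        apply Set.indicator_of_notMem
        rw [mem_ball, dist_eq_norm, sub_zero, not_lt]
        refine le_trans (min_le_left _ _) ?_
        have h1 : ‖w‖⁻¹ < (n:ℝ)+1 := by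
          refine hN.trans_le ?_
          have : (N:ℝ) ≤ (n:ℝ) := by exact_mod_cast hn
          linarith
        calc ((n:ℝ)+1)⁻¹ ≤ (‖w‖⁻¹)⁻¹ := by
              apply inv_anti₀ (by positivity) h1.le
          _ = ‖w‖ := inv_inv _
      exact Tendsto.congr' (hev.mono fun n hn => hn.symm) tendsto_const_nhds
  obtain ⟨n, hn⟩ := (htend.eventually_lt_const hε).exists
  exact ⟨δn n, hδnpos n, hδnρ n, hn⟩

set_option maxHeartbeats 1000000 in
/-- Removable singularity: a holomorphic function on `U \ {0}` whose complex
derivative is area-integrable near `0` extends holomorphically to `U`. -/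
theorem stmt_8 (U : Set ℂ) (hU : IsOpen U) (h0 : (0 : ℂ) ∈ U) (φ : ℂ → ℂ)
    (hφ : DifferentiableOn ℂ φ (U \ {0}))
    (hint : ∃ ρ > (0 : ℝ), ball (0 : ℂ) ρ ⊆ U ∧
      IntegrableOn (deriv φ) (ball (0 : ℂ) ρ) volume) :
    ∃ g : ℂ → ℂ, DifferentiableOn ℂ g U ∧ ∀ z ∈ U \ {0}, g z = φ z := by
  obtain ⟨ρ, hρ, hsub, hintg⟩ := hint
  set B : Set ℂ := ball (0:ℂ) ρ \ {0} with hB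
  have hBopen : IsOpen B := isOpen_ball.sdiff isClosed_singleton
  have hBsub : B ⊆ U \ {0} := fun w hw => ⟨hsub hw.1, hw.2⟩
  have hφB : DifferentiableOn ℂ φ B := hφ.mono hBsub
  have hdan : AnalyticOnNhd ℂ (deriv φ) B := (hφB.analyticOnNhd hBopen).deriv
  have hdcont : ContinuousOn (deriv φ) B := hdan.continuousOn
  have hddiff : ∀ w ∈ B, DifferentiableAt ℂ (deriv φ) w :=
    fun w hw => (hdan w hw).differentiableAt
  have hφdiffAt : ∀ w ∈ B, DifferentiableAt ℂ φ w :=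
    fun w hw => hφB.differentiableAt (hBopen.mem_nhds hw)
  have hmeas : Measurable (deriv φ) := measurable_deriv φ
  have hnorm_int : IntegrableOn (fun w => ‖deriv φ w‖) (ball (0:ℂ) ρ) := hintg.norm
  have hmemB : ∀ w : ℂ, w ≠ 0 → ‖w‖ < ρ → w ∈ B := by
    intro w hw hwρ
    exact ⟨by rwa [mem_ball, dist_eq_norm, sub_zero], by simpa using hw⟩
  -- mean value bound
  have hmv : ∀ z : ℂ, z ≠ 0 → ‖z‖ < ρ / 2 →
      π * (‖z‖/2)^2 * ‖deriv φ z‖ ≤ ∫ w in ball (0:ℂ) (3*‖z‖/2), ‖deriv φ w‖ := by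
    intro z hz hzρ
    have hz0 : 0 < ‖z‖ := norm_pos_iff.2 hz
    have hsubB : closedBall z (‖z‖/2) ⊆ B := by
      intro w hw
      rw [mem_closedBall, dist_eq_norm] at hw
      have h1 : ‖w‖ ≤ ‖z‖ + ‖z‖/2 := by
        calc ‖w‖ = ‖z + (w - z)‖ := by ring_nf
          _ ≤ ‖z‖ + ‖w - z‖ := norm_add_le _ _
          _ ≤ ‖z‖ + ‖z‖/2 := by linarith
      have h2 : ‖z‖/2 ≤ ‖w‖ := by
        have h3 := norm_sub_norm_le z w
        rw [norm_sub_rev] at h3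
        linarith
      apply hmemB
      · intro h
        rw [h, norm_zero] at h2
        linarith
      · linarith
    have hsub2 : ball z (‖z‖/2) ⊆ ball (0:ℂ) (3*‖z‖/2) := by
      intro w hw
      rw [mem_ball, dist_eq_norm] at hw
      rw [mem_ball, dist_eq_norm, sub_zero]
      calc ‖w‖ = ‖z + (w - z)‖ := by ring_nf
        _ ≤ ‖z‖ + ‖w - z‖ := norm_add_le _ _
        _ < 3*‖z‖/2 := by linarith
    have hball_int : IntegrableOn (fun w => ‖deriv φ w‖) (ball (0:ℂ) (3*‖z‖/2)) :=
      hnorm_int.mono_set (ball_subset_ball (by linarith))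
    have hmean := area_mean hmeas (by positivity : (0:ℝ) < ‖z‖/2)
      (hdcont.mono hsubB)
      (fun w hw => hddiff w (hsubB (ball_subset_closedBall hw)))
    refine hmean.trans ?_
    exact setIntegral_mono_set hball_int (ae_of_all _ fun w => norm_nonneg _)
      (HasSubset.Subset.eventuallyLE hsub2)
  -- the little-o statement
  have hoφ : (fun z : ℂ => φ z) =o[𝓝[≠] (0:ℂ)] fun z => z⁻¹ := by
    rw [Asymptotics.isLittleO_iff]
    intro ε hε
    set r0 : ℝ := ρ/4 with hr0
    have hr0pos : 0 < r0 := by positivity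
    have hsphere : sphere (0:ℂ) r0 ⊆ B := by
      intro w hw
      rw [mem_sphere, dist_eq_norm, sub_zero] at hw
      refine hmemB w ?_ (by rw [hw]; linarith)
      intro h
      rw [h, norm_zero] at hw
      linarith
    obtain ⟨M1, hM1⟩ : ∃ M, ∀ w ∈ sphere (0:ℂ) r0, ‖φ w‖ ≤ M :=
      (isCompact_sphere (0:ℂ) r0).exists_bound_of_continuousOn
        (hφB.continuousOn.mono hsphere)
    obtain ⟨δ₀, hδ₀pos, hδ₀ρ, hδ₀⟩ := small_integral hρ hnorm_int (π * ε / 16) (by positivity)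
    set δ : ℝ := min (2*δ₀/3) r0 with hδdef
    have hδpos : 0 < δ := lt_min (by positivity) hr0pos
    have hδr0 : δ ≤ r0 := min_le_right _ _
    set T : ℝ := ∫ w in ball (0:ℂ) ρ, ‖deriv φ w‖ with hT
    have hT0 : 0 ≤ T := setIntegral_nonneg measurableSet_ball fun _ _ => norm_nonneg _
    set M2 : ℝ := 4*T/(π*δ^2) with hM2
    have hM20 : 0 ≤ M2 := by positivity
    set C : ℝ := M1 + M2 * r0 with hC
    -- pointwise claim
    have claim : ∀ z : ℂ, z ≠ 0 → ‖z‖ < δ → ‖φ z‖ ≤ C + (ε/4) / ‖z‖ := by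
      intro z hz hzδ
      set s : ℝ := ‖z‖ with hs
      have hs0 : 0 < s := norm_pos_iff.2 hz
      have hsr0 : s ≤ r0 := le_trans hzδ.le hδr0
      set u : ℂ := (s:ℂ)⁻¹ * z with hu
      have hunorm : ‖u‖ = 1 := by
        rw [hu, norm_mul, norm_inv, Complex.norm_real, Real.norm_eq_abs,
          abs_of_pos hs0, ← hs, inv_mul_cancel₀ hs0.ne']
      have htu_norm : ∀ t : ℝ, ‖(t:ℂ) * u‖ = |t| := by
        intro t
        rw [norm_mul, hunorm, mul_one, Complex.norm_real, Real.norm_eq_abs]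
      have htu_mem : ∀ t : ℝ, 0 < t → t ≤ r0 → (t:ℂ) * u ∈ B := by
        intro t ht htr
        apply hmemB
        · intro h
          have h2 := htu_norm t
          rw [h, norm_zero, abs_of_pos ht] at h2
          linarith
        · rw [htu_norm, abs_of_pos ht]; linarith
      -- derivative bound for small t
      have hb_small : ∀ t : ℝ, 0 < t → t ≤ δ → ‖deriv φ ((t:ℂ)*u)‖ ≤ (ε/4) * (t^2)⁻¹ := by
        intro t ht htδ
        have hne : (t:ℂ)*u ≠ 0 := by
          intro h
          have h2 := htu_norm t
          rw [h, norm_zero, abs_of_pos ht] at h2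
          linarith
        have hnorm : ‖(t:ℂ)*u‖ = t := by rw [htu_norm, abs_of_pos ht]
        have h1 := hmv ((t:ℂ)*u) hne (by rw [hnorm]; have := htδ.trans hδr0; linarith)
        rw [hnorm] at h1
        have h2 : (∫ w in ball (0:ℂ) (3*t/2), ‖deriv φ w‖)
            ≤ ∫ w in ball (0:ℂ) δ₀, ‖deriv φ w‖ := by
          apply setIntegral_mono_set (hnorm_int.mono_set (ball_subset_ball hδ₀ρ.le))
            (ae_of_all _ fun w => norm_nonneg _)
          apply HasSubset.Subset.eventuallyLE (ball_subset_ball ?_)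
          have h3 : δ ≤ 2*δ₀/3 := min_le_left _ _
          linarith
        have h3 : π*(t/2)^2*‖deriv φ ((t:ℂ)*u)‖ ≤ π*ε/16 := le_trans h1 (h2.trans hδ₀.le)
        have hπ := Real.pi_pos
        have key : ‖deriv φ ((t:ℂ)*u)‖ ≤ (π*ε/16)/(π*(t/2)^2) := by
          rw [le_div_iff₀ (by positivity)]
          linarith [h3]
        refine key.trans_eq ?_
        field_simp
        ring
      -- derivative bound for large t
      have hb_big : ∀ t : ℝ, δ ≤ t → t ≤ r0 → ‖deriv φ ((t:ℂ)*u)‖ ≤ M2 := by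
        intro t ht htr
        have ht0 : 0 < t := lt_of_lt_of_le hδpos ht
        have hne : (t:ℂ)*u ≠ 0 := by
          intro h
          have h2 := htu_norm t
          rw [h, norm_zero, abs_of_pos ht0] at h2
          linarith
        have hnorm : ‖(t:ℂ)*u‖ = t := by rw [htu_norm, abs_of_pos ht0]
        have h1 := hmv ((t:ℂ)*u) hne (by rw [hnorm]; linarith)
        rw [hnorm] at h1
        have h2 : (∫ w in ball (0:ℂ) (3*t/2), ‖deriv φ w‖) ≤ T := by
          apply setIntegral_mono_set hnorm_int (ae_of_all _ fun w => norm_nonneg _)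
          apply HasSubset.Subset.eventuallyLE (ball_subset_ball ?_)
          linarith
        have h3 : π*(t/2)^2*‖deriv φ ((t:ℂ)*u)‖ ≤ T := le_trans h1 h2
        have hπ := Real.pi_pos
        rw [hM2]
        have key : ‖deriv φ ((t:ℂ)*u)‖ ≤ T/(π*(t/2)^2) := by
          rw [le_div_iff₀ (by positivity)]
          linarith [h3]
        refine key.trans ?_
        rw [div_le_div_iff₀ (by positivity) (by positivity)]
        have hδt : δ^2 ≤ t^2 := pow_le_pow_left₀ hδpos.le ht 2
        linarith [mul_le_mul_of_nonneg_left hδt (mul_nonneg hπ.le hT0)]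
      -- continuity of the integrand along the ray
      have hray_cont : ContinuousOn (fun t : ℝ => deriv φ ((t:ℂ)*u)) (Icc s r0) := by
        apply hdcont.comp
        · exact (Complex.continuous_ofReal.mul continuous_const).continuousOn
        · intro t ht
          exact htu_mem t (lt_of_lt_of_le hs0 ht.1) ht.2
      -- FTC
      have hftc : φ ((r0:ℂ)*u) - φ ((s:ℂ)*u) = ∫ t in s..r0, deriv φ ((t:ℂ)*u) * u := by
        refine (intervalIntegral.integral_eq_sub_of_hasDerivAt
          (f := fun t : ℝ => φ ((t:ℂ)*u)) ?_ ?_).symm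
        · intro t ht
          rw [uIcc_of_le hsr0] at ht
          have htpos : 0 < t := lt_of_lt_of_le hs0 ht.1
          have hmem := htu_mem t htpos ht.2
          have h1 : HasDerivAt φ (deriv φ ((t:ℂ)*u)) ((t:ℂ)*u) :=
            (hφdiffAt _ hmem).hasDerivAt
          have h2 : HasDerivAt (fun y : ℂ => y * u) u ((t:ℂ)) := by
            simpa using (hasDerivAt_id ((t:ℂ))).mul_const u
          exact (h1.comp ((t:ℂ)) h2).comp_ofReal
        · apply ContinuousOn.intervalIntegrable
          rw [uIcc_of_le hsr0]
          exact hray_cont.mul continuousOn_const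
      -- splitting the norm integral
      have hsδ : s ≤ δ := hzδ.le
      have hint1 : IntervalIntegrable (fun t : ℝ => ‖deriv φ ((t:ℂ)*u)‖) volume s δ := by
        apply ContinuousOn.intervalIntegrable
        rw [uIcc_of_le hsδ]
        exact (hray_cont.mono (Icc_subset_Icc le_rfl hδr0)).norm
      have hint2 : IntervalIntegrable (fun t : ℝ => ‖deriv φ ((t:ℂ)*u)‖) volume δ r0 := by
        apply ContinuousOn.intervalIntegrable
        rw [uIcc_of_le hδr0]
        exact (hray_cont.mono (Icc_subset_Icc hsδ le_rfl)).norm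
      have hn1 : ∫ t in s..δ, ‖deriv φ ((t:ℂ)*u)‖ ≤ (ε/4) * (s⁻¹ - δ⁻¹) := by
        have hub : IntervalIntegrable (fun t : ℝ => (ε/4) * (t^2)⁻¹) volume s δ := by
          apply ContinuousOn.intervalIntegrable
          apply ContinuousOn.mul continuousOn_const
          apply ContinuousOn.inv₀ (continuousOn_pow 2)
          intro t ht
          rw [uIcc_of_le hsδ] at ht
          have : 0 < t := lt_of_lt_of_le hs0 ht.1
          positivity
        have hmono := intervalIntegral.integral_mono_on hsδ hint1 hub
          (fun t ht => hb_small t (lt_of_lt_of_le hs0 ht.1) ht.2)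
        refine hmono.trans_eq ?_
        rw [intervalIntegral.integral_const_mul]
        have hval : ∫ t in s..δ, (t^2)⁻¹ = -δ⁻¹ - -s⁻¹ := by
          apply intervalIntegral.integral_eq_sub_of_hasDerivAt
            (f := fun t : ℝ => -t⁻¹) (f' := fun t : ℝ => (t^2)⁻¹)
          · intro t ht
            rw [uIcc_of_le hsδ] at ht
            have ht0 : t ≠ 0 := (lt_of_lt_of_le hs0 ht.1).ne'
            have h := (hasDerivAt_inv ht0).neg
            rw [show (-fun y : ℝ => y⁻¹) = fun t => -t⁻¹ from rfl] at h
            simpa using h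
          · apply ContinuousOn.intervalIntegrable
            apply ContinuousOn.inv₀ (continuousOn_pow 2)
            intro t ht
            rw [uIcc_of_le hsδ] at ht
            have : 0 < t := lt_of_lt_of_le hs0 ht.1
            positivity
        rw [hval]
        ring
      have hn2 : ∫ t in δ..r0, ‖deriv φ ((t:ℂ)*u)‖ ≤ M2 * (r0 - δ) := by
        have hmono := intervalIntegral.integral_mono_on hδr0 hint2
          intervalIntegrable_const (fun t ht => hb_big t ht.1 ht.2)
        refine hmono.trans_eq ?_
        rw [intervalIntegral.integral_const]
        simp [smul_eq_mul]
        ring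
      have hnormint : ‖∫ t in s..r0, deriv φ ((t:ℂ)*u) * u‖
          ≤ (∫ t in s..δ, ‖deriv φ ((t:ℂ)*u)‖) + ∫ t in δ..r0, ‖deriv φ ((t:ℂ)*u)‖ := by
        calc ‖∫ t in s..r0, deriv φ ((t:ℂ)*u) * u‖
            ≤ ∫ t in s..r0, ‖deriv φ ((t:ℂ)*u) * u‖ :=
              intervalIntegral.norm_integral_le_integral_norm hsr0
          _ = ∫ t in s..r0, ‖deriv φ ((t:ℂ)*u)‖ := by
              simp [norm_mul, hunorm]
          _ = (∫ t in s..δ, ‖deriv φ ((t:ℂ)*u)‖) + ∫ t in δ..r0, ‖deriv φ ((t:ℂ)*u)‖ :=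
              (intervalIntegral.integral_add_adjacent_intervals hint1 hint2).symm
      have hzu : (s:ℂ) * u = z := by
        rw [hu, ← mul_assoc, mul_inv_cancel₀ (by exact_mod_cast hs0.ne'), one_mul]
      have hM1r0 : ‖φ ((r0:ℂ)*u)‖ ≤ M1 := by
        apply hM1
        rw [mem_sphere, dist_eq_norm, sub_zero, htu_norm, abs_of_pos hr0pos]
      have hδinv : 0 ≤ (ε/4) * δ⁻¹ := by positivity
      have hfinal : ‖φ z‖ ≤ ‖φ ((r0:ℂ)*u)‖ + ‖∫ t in s..r0, deriv φ ((t:ℂ)*u) * u‖ := by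
        have : φ z = φ ((r0:ℂ)*u) - (∫ t in s..r0, deriv φ ((t:ℂ)*u) * u) := by
          rw [← hzu] at *
          rw [← hftc]
          ring
        rw [this]
        exact (norm_sub_le _ _)
      have hdiv : (ε/4) * (s⁻¹ - δ⁻¹) ≤ (ε/4) / s := by
        have h5 : (ε/4) * (s⁻¹ - δ⁻¹) ≤ (ε/4) * s⁻¹ := by
          apply mul_le_mul_of_nonneg_left _ (by positivity)
          have : (0:ℝ) ≤ δ⁻¹ := inv_nonneg.2 hδpos.le
          linarith
        simpa [div_eq_mul_inv] using h5
      calc ‖φ z‖ ≤ ‖φ ((r0:ℂ)*u)‖ + ‖∫ t in s..r0, deriv φ ((t:ℂ)*u) * u‖ := hfinal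
        _ ≤ M1 + ((ε/4) * (s⁻¹ - δ⁻¹) + M2 * (r0 - δ)) := by
            have := hnormint
            linarith [hn1, hn2, hM1r0]
        _ ≤ C + (ε/4) / s := by
            rw [hC]
            have h4 : M2 * (r0 - δ) ≤ M2 * r0 := by nlinarith [hM20, hδpos]
            linarith [hdiv]
    -- upgrade the claim to the filter statement
    set η : ℝ := min δ ((3*ε/4)/(|C|+1)) with hηdef
    have hηpos : 0 < η := lt_min hδpos (by positivity)
    filter_upwards [self_mem_nhdsWithin,
      mem_nhdsWithin_of_mem_nhds (ball_mem_nhds (0:ℂ) hηpos)] with z hz hzball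
    simp only [mem_compl_iff, mem_singleton_iff] at hz
    rw [mem_ball, dist_eq_norm, sub_zero] at hzball
    have hz0 : 0 < ‖z‖ := norm_pos_iff.2 hz
    have h1 := claim z hz (lt_of_lt_of_le hzball (min_le_left _ _))
    have h2 : ‖z‖ < (3*ε/4)/(|C|+1) := lt_of_lt_of_le hzball (min_le_right _ _)
    rw [norm_inv]
    have hCle : C ≤ (3*ε/4) / ‖z‖ := by
      rw [le_div_iff₀ hz0]
      rw [lt_div_iff₀ (by positivity : (0:ℝ) < |C|+1)] at h2
      nlinarith [le_abs_self C, abs_nonneg C]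
    have h3 : (ε/4)/‖z‖ + (3*ε/4)/‖z‖ = ε * ‖z‖⁻¹ := by
      field_simp
      ring
    linarith [h1, hCle]
  -- constant little-o
  have htendinv : Tendsto (fun z : ℂ => ‖z‖⁻¹) (𝓝[≠] (0:ℂ)) atTop := by
    have h1 : Tendsto (fun z : ℂ => ‖z‖) (𝓝[≠] (0:ℂ)) (𝓝[>] (0:ℝ)) := by
      apply tendsto_nhdsWithin_of_tendsto_nhds_of_eventually_within
      · simpa using (continuous_norm.tendsto (0:ℂ)).mono_left nhdsWithin_le_nhds
      · filter_upwards [self_mem_nhdsWithin] with z hz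
        simp only [mem_compl_iff, mem_singleton_iff] at hz
        exact norm_pos_iff.2 hz
    exact tendsto_inv_nhdsGT_zero.comp h1
  have hconst : (fun _ : ℂ => φ 0) =o[𝓝[≠] (0:ℂ)] fun z => z⁻¹ := by
    apply Asymptotics.isLittleO_const_left.2
    right
    simpa [Function.comp_def, norm_inv] using htendinv
  have ho : (fun z : ℂ => φ z - φ 0) =o[𝓝[≠] (0:ℂ)] fun z : ℂ => (z - 0)⁻¹ := by
    simpa using hoφ.sub hconst
  have hupdate := Complex.differentiableOn_update_limUnder_of_isLittleO (hU.mem_nhds h0) hφ ho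
  exact ⟨_, hupdate, fun z hz => Function.update_of_ne (by simpa using hz.2) _ _⟩
end

section
/- Let 𝔻 ⊂ ℂ be the open unit disk, let Γ be a countably infinite family of injective holomorphic maps γ : 𝔻 → 𝔻, and let P ⊆ 𝔻 be a measurable set such that the images {γ(P)}_{γ ∈ Γ} are pairwise disjoint. Let Φ : 𝔻 → ℂ be a continuous function satisfying the quadratic-differential transformation law Φ(γ(z))·γ′(z)² = Φ(z) for all z ∈ 𝔻 and all γ ∈ Γ. If Φ is integrable on 𝔻 with respect to two-dimensional Lebesgue measure, then ∫_P |Φ| dA = 0. -/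
open MeasureTheory Metric

lemma det_restrictScalars_smulRight (c : ℂ) :
    ((ContinuousLinearMap.smulRight (1 : ℂ →L[ℂ] ℂ) c).restrictScalars ℝ).det
      = Complex.normSq c := by
  rw [ContinuousLinearMap.det]
  have h : ((ContinuousLinearMap.smulRight (1 : ℂ →L[ℂ] ℂ) c).restrictScalars
      ℝ).toLinearMap = Algebra.lmul ℝ ℂ c := by
    ext z
    simp [mul_comm]
  rw [h, ← Algebra.norm_apply, Algebra.norm_complex_apply]

/-- An integrable quadratic differential on 𝔻 invariant under countably
infinitely many injective holomorphic maps with pairwise disjoint images of a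
set `P` must vanish in `L¹(P)`. -/
theorem stmt_12 (γ : ℕ → ℂ → ℂ)
    (hhol : ∀ n, DifferentiableOn ℂ (γ n) (ball (0 : ℂ) 1))
    (hmaps : ∀ n, Set.MapsTo (γ n) (ball (0 : ℂ) 1) (ball (0 : ℂ) 1))
    (hinj : ∀ n, Set.InjOn (γ n) (ball (0 : ℂ) 1))
    (P : Set ℂ) (hPsub : P ⊆ ball (0 : ℂ) 1) (hPmeas : MeasurableSet P)
    (hdisj : ∀ m n, m ≠ n → Disjoint (γ m '' P) (γ n '' P))
    (Φ : ℂ → ℂ) (hΦc : ContinuousOn Φ (ball (0 : ℂ) 1))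
    (htrans : ∀ n, ∀ z ∈ ball (0 : ℂ) 1, Φ (γ n z) * (deriv (γ n) z) ^ 2 = Φ z)
    (hint : IntegrableOn Φ (ball (0 : ℂ) 1) volume) :
    ∫ z in P, ‖Φ z‖ ∂volume = 0 := by
  set B : Set ℂ := ball (0 : ℂ) 1 with hB
  have hBopen : IsOpen B := isOpen_ball
  set g : ℂ → ℝ := fun z => ‖Φ z‖ with hg
  set I : ℝ := ∫ z in P, g z ∂volume with hI
  -- the derivative data
  set f' : ℕ → ℂ → (ℂ →L[ℝ] ℂ) := fun n x =>
    (ContinuousLinearMap.smulRight (1 : ℂ →L[ℂ] ℂ) (deriv (γ n) x)).restrictScalars ℝ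
    with hf'def
  have hderiv : ∀ n, ∀ x ∈ P, HasFDerivWithinAt (γ n) (f' n x) P x := by
    intro n x hx
    have hx' : x ∈ B := hPsub hx
    have hdiff : DifferentiableAt ℂ (γ n) x :=
      (hhol n).differentiableAt (hBopen.mem_nhds hx')
    exact ((hdiff.hasDerivAt.hasFDerivAt).restrictScalars ℝ).hasFDerivWithinAt
  -- integrability of g on B
  have hgint : IntegrableOn g B volume := by
    have := hint.norm
    exact this
  -- each image has the same integral I
  have himg : ∀ n, ∫ z in γ n '' P, g z ∂volume = I := by
    intro n
    rw [integral_image_eq_integral_abs_det_fderiv_smul volume hPmeas (hderiv n)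
      ((hinj n).mono hPsub) g]
    apply setIntegral_congr_fun hPmeas
    intro x hx
    have hx' : x ∈ B := hPsub hx
    have hdet : (f' n x).det = Complex.normSq (deriv (γ n) x) :=
      det_restrictScalars_smulRight _
    have habs : ‖Φ (γ n x)‖ * Complex.normSq (deriv (γ n) x)
        = ‖Φ x‖ := by
      have := congrArg (‖·‖) (htrans n x hx')
      simpa [norm_mul, norm_pow, Complex.sq_norm] using this
    simp only [hdet, smul_eq_mul, hg]
    rw [abs_of_nonneg (Complex.normSq_nonneg _)]
    linarith [habs]
  -- images are measurable
  have hmeas : ∀ n, MeasurableSet (γ n '' P) := fun n =>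
    measurable_image_of_fderivWithin hPmeas (hderiv n) ((hinj n).mono hPsub)
  -- images lie in B
  have hsub : ∀ n, γ n '' P ⊆ B := fun n =>
    (Set.image_mono hPsub).trans ((hmaps n).image_subset)
  -- g is nonnegative
  have hgnn : ∀ z, 0 ≤ g z := fun z => norm_nonneg _
  -- key bound : N • I ≤ ∫_B g for all N
  have hbound : ∀ N : ℕ, (N : ℝ) * I ≤ ∫ z in B, g z ∂volume := by
    intro N
    have hsum : ∑ n ∈ Finset.range N, ∫ z in γ n '' P, g z ∂volume
        = ∫ z in ⋃ n ∈ Finset.range N, γ n '' P, g z ∂volume := by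
      refine (integral_biUnion_finset _ (fun n _ => hmeas n) ?_
        (fun n _ => hgint.mono_set (hsub n))).symm
      intro m _ n _ hmn
      exact hdisj m n hmn
    have hle : ∫ z in ⋃ n ∈ Finset.range N, γ n '' P, g z ∂volume
        ≤ ∫ z in B, g z ∂volume := by
      apply setIntegral_mono_set hgint
      · exact Filter.Eventually.of_forall hgnn
      · exact Filter.Eventually.of_forall
          (Set.iUnion₂_subset fun n _ => hsub n)
    calc (N : ℝ) * I = ∑ n ∈ Finset.range N, ∫ z in γ n '' P, g z ∂volume := by
          simp [himg, mul_comm]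
      _ ≤ _ := hsum ▸ hle
  -- conclude
  have hInn : 0 ≤ I := setIntegral_nonneg hPmeas fun z _ => hgnn z
  by_contra h
  have hIpos : 0 < I := lt_of_le_of_ne hInn (Ne.symm h)
  obtain ⟨N, hN⟩ := exists_nat_gt ((∫ z in B, g z ∂volume) / I)
  have : (∫ z in B, g z ∂volume) < N * I := by
    rw [div_lt_iff₀ hIpos] at hN
    exact hN
  exact absurd (hbound N) (not_le.mpr this)
end
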